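/- arXiv:1908.08320 — 4 statements merged into one kernel-verified Lean document; each statement's English description precedes it below -/
import Mathlib

section
/- If ε = (ε(s₁),…,ε(sₙ))′ is a strictly stationary random vector (its distribution is invariant under the relevant shift/permutation group), f⁻¹ is measurable, and Y is defined componentwise by Y(sᵢ) = sqrt(f⁻¹(Xᵢ))·ε(sᵢ) where X = (I − W2)⁻¹(α + W1·g(ε)) is a measurable function of ε that is equivariant under the same group, then Y = (Y(s₁),…,Y(sₙ))′ is strictly stationary. -/
open Matrix MeasureTheory

/-- Corollary 1: strict stationarity of Y given strict stationarity of ε, where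
strict stationarity means invariance of the distribution under a group G of
index transformations and the map ε ↦ X is measurable and G-equivariant. -/
theorem unified_spGARCH_strict_stationarity
    {n : ℕ} {Ω : Type*} [MeasurableSpace Ω] (μ : Measure Ω) [IsProbabilityMeasure μ]
    (W1 W2 : Matrix (Fin n) (Fin n) ℝ) (hrk : (1 - W2).rank = n)
    (finv : ℝ → ℝ) (hfinv : Measurable finv)
    (α : Fin n → ℝ) (g : (Fin n → ℝ) → Fin n → ℝ) (hg : Measurable g)
    (G : Subgroup (Equiv.Perm (Fin n)))
    (ε : Ω → Fin n → ℝ) (hε : Measurable ε)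
    -- strict stationarity of ε with respect to the group G
    (hstat : ∀ σ ∈ G, Measure.map (fun ω => fun i => ε ω (σ i)) μ = Measure.map ε μ)
    (Xmap : (Fin n → ℝ) → Fin n → ℝ)
    (hXmap : ∀ x, Xmap x = (1 - W2)⁻¹.mulVec (α + W1.mulVec (g x)))
    -- equivariance of the map ε ↦ X under the same group
    (hequiv : ∀ σ ∈ G, ∀ x : Fin n → ℝ,
      Xmap (fun i => x (σ i)) = fun i => Xmap x (σ i))
    (Y : Ω → Fin n → ℝ)
    (hY : ∀ ω i, Y ω i = Real.sqrt (finv (Xmap (ε ω) i)) * ε ω i) :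
    ∀ σ ∈ G, Measure.map (fun ω => fun i => Y ω (σ i)) μ = Measure.map Y μ := by

  intro σ hσ
  -- the componentwise transformation
  set F : (Fin n → ℝ) → Fin n → ℝ :=
    fun x i => Real.sqrt (finv (Xmap x i)) * x i with hF
  have hXmeas : Measurable Xmap := by
    have : Measurable fun x : Fin n → ℝ =>
        (1 - W2)⁻¹.mulVec (α + W1.mulVec (g x)) := by
      apply measurable_pi_lambda
      intro i
      simp only [Matrix.mulVec, dotProduct]
      apply Finset.measurable_sum
      intro j _
      apply Measurable.const_mul
      have : Measurable fun x : Fin n → ℝ => (α + W1.mulVec (g x)) j := by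
        simp only [Pi.add_apply, Matrix.mulVec, dotProduct]
        apply Measurable.const_add
        apply Finset.measurable_sum
        intro k _
        exact ((measurable_pi_apply k).comp hg).const_mul _
      exact this
    simpa [funext hXmap] using this
  have hFmeas : Measurable F := by
    apply measurable_pi_lambda
    intro i
    exact ((hfinv.comp ((measurable_pi_apply i).comp hXmeas)).sqrt).mul
      (measurable_pi_apply i)
  have hYF : Y = F ∘ ε := by
    funext ω; funext i; simp [hF, hY ω i]
  have hshift : (fun ω => fun i => Y ω (σ i)) = F ∘ (fun ω => fun i => ε ω (σ i)) := by
    funext ω; funext i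
    have h1 : Xmap (fun j => ε ω (σ j)) = fun j => Xmap (ε ω) (σ j) := hequiv σ hσ (ε ω)
    simp only [Function.comp_apply, hF, hY ω (σ i), h1]
  have hεσ : Measurable fun ω => fun i => ε ω (σ i) := by
    apply measurable_pi_lambda
    intro i
    exact (measurable_pi_apply (σ i)).comp hε
  calc Measure.map (fun ω => fun i => Y ω (σ i)) μ
      = Measure.map F (Measure.map (fun ω => fun i => ε ω (σ i)) μ) := by
        rw [hshift, Measure.map_map hFmeas hεσ]
    _ = Measure.map F (Measure.map ε μ) := by rw [hstat σ hσ]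
    _ = Measure.map Y μ := by rw [Measure.map_map hFmeas hε, hYF]
end

section
/- In the spatial log-GARCH model with f(x) = log x and g(ε(sᵢ)) = log(|ε(sᵢ)|^b) for b > 0, using log|ε(sᵢ)| = log|Y(sᵢ)| − (1/2)log h(sᵢ), the vector X = (log h(sᵢ))ᵢ satisfies the explicit equation X = (I + 0.5b·W1 − W2)⁻¹(α + b·W1·Ỹ_L), where Ỹ_L = (log|Y(s₁)|,…,log|Y(sₙ)|)′, provided I + 0.5b·W1 − W2 is invertible. -/
open Matrix

/-- Spatial log-GARCH: explicit solution X = (I + 0.5b·W1 − W2)⁻¹(α + b·W1·Ỹ_L). -/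
theorem spLogGARCH_explicit_solution
    {n : ℕ} (W1 W2 : Matrix (Fin n) (Fin n) ℝ)
    (α X : Fin n → ℝ) (ε Y : Fin n → ℝ) (b : ℝ) (hb : 0 < b)
    (hεne : ∀ i, ε i ≠ 0)
    (hlog : ∀ i, Real.log |ε i| = Real.log |Y i| - X i / 2)
    (heq : X = α + W1.mulVec (fun i => Real.log (|ε i| ^ b)) + W2.mulVec X)
    (hinv : IsUnit (1 + (0.5 * b) • W1 - W2)) :
    X = (1 + (0.5 * b) • W1 - W2)⁻¹.mulVec
      (α + b • W1.mulVec (fun i => Real.log |Y i|)) := by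
  set M : Matrix (Fin n) (Fin n) ℝ := 1 + (0.5 * b) • W1 - W2 with hM
  have hg : (fun i => Real.log (|ε i| ^ b)) =
      b • (fun i => Real.log |Y i|) - (0.5 * b) • X := by
    funext i
    have hpos : (0:ℝ) < |ε i| := abs_pos.mpr (hεne i)
    have := Real.log_rpow hpos b
    simp only [this, hlog i, Pi.sub_apply, Pi.smul_apply, smul_eq_mul]
    ring
  have hMX : M.mulVec X = α + b • W1.mulVec (fun i => Real.log |Y i|) := by
    rw [hM, Matrix.sub_mulVec, Matrix.add_mulVec, Matrix.one_mulVec,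
      Matrix.smul_mulVec]
    rw [hg] at heq
    rw [Matrix.mulVec_sub, Matrix.mulVec_smul, Matrix.mulVec_smul] at heq
    nth_rewrite 1 [heq]
    abel
  have hMdet : IsUnit M.det := (Matrix.isUnit_iff_isUnit_det M).mp hinv
  calc X = (M⁻¹ * M).mulVec X := by
        rw [Matrix.nonsing_inv_mul M hMdet, Matrix.one_mulVec]
    _ = M⁻¹.mulVec (M.mulVec X) := by rw [← Matrix.mulVec_mulVec]
    _ = _ := by rw [hMX]
end

section
/- Let f⁻¹ : ℝ → [0,∞) be convex, k ∈ ℕ, and suppose E(ε(sᵢ)^{2k}) < ∞ and E((f⁻¹(2·dᵢ′g(ε)))^{2k}) < ∞, where Y(sᵢ) = sqrt(f⁻¹(cᵢ + dᵢ′g(ε)))·ε(sᵢ). Then E(|Y(sᵢ)|^k) < ∞, i.e., the k-th moment of Y(sᵢ) exists. -/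
open MeasureTheory Finset

private lemma pow_le_one_add_pow_two_mul {v : ℝ} (hv : 0 ≤ v) (k : ℕ) :
    v ^ k ≤ 1 + v ^ (2 * k) := by
  rcases le_total v 1 with h | h
  · have : v ^ k ≤ 1 := pow_le_one₀ hv h
    have h2 : 0 ≤ v ^ (2 * k) := pow_nonneg hv _
    linarith
  · have : v ^ k ≤ v ^ (2 * k) := pow_le_pow_right₀ h (by omega)
    linarith

private lemma add_pow_le_two_pow_mul {u v : ℝ} (hu : 0 ≤ u) (hv : 0 ≤ v) (k : ℕ) :
    (u + v) ^ k ≤ 2 ^ k * (u ^ k + v ^ k) := by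
  have h1 : u + v ≤ 2 * max u v := by
    rcases le_total u v with h | h
    · simp [max_eq_right h]; linarith
    · simp [max_eq_left h]; linarith
  calc (u + v) ^ k ≤ (2 * max u v) ^ k :=
        pow_le_pow_left₀ (by positivity) h1 k
    _ = 2 ^ k * (max u v) ^ k := mul_pow _ _ _
    _ ≤ 2 ^ k * (u ^ k + v ^ k) := by
        gcongr
        rcases le_total u v with h | h
        · rw [max_eq_right h]
          have := pow_nonneg hu k
          linarith
        · rw [max_eq_left h]
          have := pow_nonneg hv k
          linarith

/-- Theorem 2(a): existence of the k-th moment of Y(sᵢ). -/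
theorem unified_spGARCH_moment_existence
    {n : ℕ} {Ω : Type*} [MeasurableSpace Ω] (μ : Measure Ω) [IsProbabilityMeasure μ]
    (finv : ℝ → ℝ) (hconv : ConvexOn ℝ Set.univ finv) (hnonneg : ∀ x, 0 ≤ finv x)
    (k : ℕ) (c : ℝ) (d : Fin n → ℝ)
    (g : (Fin n → ℝ) → Fin n → ℝ) (ε : Ω → Fin n → ℝ) (i : Fin n)
    (hmeas : AEStronglyMeasurable (fun ω => finv (c + ∑ j, d j * g (ε ω) j)) μ)
    (hmeasε : AEStronglyMeasurable (fun ω => ε ω i) μ)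
    (hε2k : Integrable (fun ω => (ε ω i) ^ (2 * k)) μ)
    (hf2k : Integrable (fun ω => (finv (2 * ∑ j, d j * g (ε ω) j)) ^ (2 * k)) μ) :
    Integrable (fun ω =>
      |Real.sqrt (finv (c + ∑ j, d j * g (ε ω) j)) * ε ω i| ^ k) μ := by
  set S : Ω → ℝ := fun ω => ∑ j, d j * g (ε ω) j with hS
  -- the dominating function
  have h1 : Integrable (fun ω =>
      (2:ℝ) ^ k * ((finv (2 * c) ^ k + 1) + finv (2 * S ω) ^ (2 * k))) μ := by
    have := ((integrable_const (finv (2 * c) ^ k + 1)).add hf2k).const_mul ((2:ℝ) ^ k)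
    simpa using this
  have hB : Integrable (fun ω =>
      ((2:ℝ) ^ k * (finv (2 * c) ^ k + (1 + finv (2 * S ω) ^ (2 * k)))
        + (ε ω i) ^ (2 * k)) / 2) μ := by
    simpa [add_assoc] using (h1.add hε2k).div_const 2
  refine hB.mono' ?_ ?_
  · have h1 : AEStronglyMeasurable (fun ω => Real.sqrt (finv (c + S ω))) μ :=
      Real.continuous_sqrt.comp_aestronglyMeasurable hmeas
    exact (continuous_abs.comp_aestronglyMeasurable (h1.mul hmeasε)).pow _
  · filter_upwards with ω
    set A := finv (c + S ω) with hA
    set e := ε ω i with he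
    have hA0 : 0 ≤ A := hnonneg _
    have habs : |Real.sqrt A * e| = Real.sqrt A * |e| := by
      rw [abs_mul, abs_of_nonneg (Real.sqrt_nonneg _)]
    have hnn : (0:ℝ) ≤ |Real.sqrt A * e| ^ k := by positivity
    rw [Real.norm_eq_abs, abs_of_nonneg hnn, habs, mul_pow]
    -- 2ab ≤ a² + b²
    have hab : Real.sqrt A ^ k * |e| ^ k ≤ (A ^ k + e ^ (2 * k)) / 2 := by
      have h2 := two_mul_le_add_sq (Real.sqrt A ^ k) (|e| ^ k)
      have ha2 : (Real.sqrt A ^ k) ^ 2 = A ^ k := by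
        rw [← pow_mul, mul_comm k 2, pow_mul, Real.sq_sqrt hA0]
      have hb2 : (|e| ^ k) ^ 2 = e ^ (2 * k) := by
        rw [← pow_mul, mul_comm k 2, pow_mul, sq_abs, ← pow_mul]
      rw [ha2, hb2] at h2
      linarith
    -- convexity bound on A
    have hconvb : A ≤ (finv (2 * c) + finv (2 * S ω)) / 2 := by
      have := hconv.2 (Set.mem_univ (2 * c)) (Set.mem_univ (2 * S ω))
        (by norm_num : (0:ℝ) ≤ 1/2) (by norm_num : (0:ℝ) ≤ 1/2) (by norm_num)
      simp only [smul_eq_mul] at this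
      have heq : (1/2 : ℝ) * (2 * c) + (1/2 : ℝ) * (2 * S ω) = c + S ω := by ring
      rw [heq] at this
      linarith
    have hu : 0 ≤ finv (2 * c) := hnonneg _
    have hv : 0 ≤ finv (2 * S ω) := hnonneg _
    have hAk : A ^ k ≤ 2 ^ k * (finv (2 * c) ^ k + (1 + finv (2 * S ω) ^ (2 * k))) := by
      calc A ^ k ≤ (finv (2 * c) + finv (2 * S ω)) ^ k := by
            apply pow_le_pow_left₀ hA0
            linarith
        _ ≤ 2 ^ k * (finv (2 * c) ^ k + finv (2 * S ω) ^ k) :=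
            add_pow_le_two_pow_mul hu hv k
        _ ≤ 2 ^ k * (finv (2 * c) ^ k + (1 + finv (2 * S ω) ^ (2 * k))) := by
            gcongr
            exact pow_le_one_add_pow_two_mul hv k
    linarith
end

section
/- Let W1, W2 be n×n nonnegative matrices with zero diagonals such that there is a permutation matrix P making both P W1 Pᵀ and P W2 Pᵀ strictly lower triangular (i.e., the process is 'oriented'). Then for any ε ∈ ℝⁿ, the matrix I − W1·diag(ε^{(2)}) − W2 is invertible, and the inverse (I − W1·diag(ε^{(2)}) − W2)⁻¹ has all nonnegative entries; consequently h = (I − W1·diag(ε^{(2)}) − W2)⁻¹α has positive entries whenever α has positive entries. -/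
open Matrix

/-- For an oriented spGARCH process (weight matrices simultaneously strictly
lower triangular after a permutation), I − W1·diag(ε²) − W2 is invertible with
entrywise nonnegative inverse, and h has positive entries for positive α. -/
theorem spGARCH_oriented_invertible_nonneg
    {n : ℕ} (W1 W2 : Matrix (Fin n) (Fin n) ℝ)
    (hW1nonneg : ∀ i j, 0 ≤ W1 i j) (hW2nonneg : ∀ i j, 0 ≤ W2 i j)
    (hW1diag : ∀ i, W1 i i = 0) (hW2diag : ∀ i, W2 i i = 0)
    (σ : Equiv.Perm (Fin n))
    (htri1 : ∀ i j, σ i ≤ σ j → W1 i j = 0)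
    (htri2 : ∀ i j, σ i ≤ σ j → W2 i j = 0)
    (ε : Fin n → ℝ) :
    IsUnit (1 - W1 * Matrix.diagonal (fun l => ε l ^ 2) - W2) ∧
    (∀ i j, 0 ≤ (1 - W1 * Matrix.diagonal (fun l => ε l ^ 2) - W2)⁻¹ i j) ∧
    (∀ α : Fin n → ℝ, (∀ i, 0 < α i) →
      ∀ i, 0 < ((1 - W1 * Matrix.diagonal (fun l => ε l ^ 2) - W2)⁻¹.mulVec α) i) := by
  set M : Matrix (Fin n) (Fin n) ℝ :=
    W1 * Matrix.diagonal (fun l => ε l ^ 2) + W2 with hM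
  have hsub : (1 : Matrix (Fin n) (Fin n) ℝ) - W1 * Matrix.diagonal (fun l => ε l ^ 2) - W2
      = 1 - M := by rw [hM, sub_sub]
  have hMentry : ∀ i j, M i j = W1 i j * ε j ^ 2 + W2 i j := by
    intro i j
    simp [hM, Matrix.add_apply, Matrix.mul_diagonal]
  have hMnonneg : ∀ i j, 0 ≤ M i j := by
    intro i j
    rw [hMentry]
    have := hW1nonneg i j
    have := hW2nonneg i j
    positivity
  have hMtri : ∀ i j, σ i ≤ σ j → M i j = 0 := by
    intro i j h
    rw [hMentry, htri1 i j h, htri2 i j h]; ring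
  -- powers vanish
  have hpow0 : ∀ k : ℕ, ∀ i j, (σ i : ℕ) < (σ j : ℕ) + k → (M ^ k) i j = 0 := by
    intro k
    induction k with
    | zero =>
      intro i j h
      have hij : i ≠ j := by
        intro he; subst he; omega
      simp [Matrix.one_apply, hij]
    | succ k ih =>
      intro i j h
      rw [pow_succ', Matrix.mul_apply]
      apply Finset.sum_eq_zero
      intro l _
      by_cases hl : σ i ≤ σ l
      · rw [hMtri i l hl, zero_mul]
      · push_neg at hl
        have : (σ l : ℕ) < (σ j : ℕ) + k := by
          have h1 : (σ l : ℕ) < (σ i : ℕ) := hl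
          omega
        rw [ih l j this, mul_zero]
  have hMn : M ^ n = 0 := by
    ext i j
    rw [hpow0 n i j (by have := (σ i).isLt; omega)]
    simp
  have hpownn : ∀ k : ℕ, ∀ i j, 0 ≤ (M ^ k) i j := by
    intro k
    induction k with
    | zero => intro i j; rw [pow_zero]; by_cases h : i = j <;> simp [Matrix.one_apply, h]
    | succ k ih =>
      intro i j
      rw [pow_succ, Matrix.mul_apply]
      exact Finset.sum_nonneg fun l _ => mul_nonneg (ih i l) (hMnonneg l j)
  set S : Matrix (Fin n) (Fin n) ℝ := ∑ k ∈ Finset.range n, M ^ k with hS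
  have hright : (1 - M) * S = 1 := by
    have : (1 - M) * S = ∑ k ∈ Finset.range n, (M ^ k - M ^ (k + 1)) := by
      rw [hS, Finset.mul_sum]
      apply Finset.sum_congr rfl
      intro k _
      rw [sub_mul, one_mul, pow_succ']
    rw [this, Finset.sum_range_sub' (fun k => M ^ k), pow_zero, hMn, sub_zero]
  have hleft : S * (1 - M) = 1 := mul_eq_one_comm.mp hright
  have hunit : IsUnit (1 - M) :=
    (Matrix.isUnit_iff_isUnit_det _).mpr (Matrix.isUnit_det_of_left_inverse hleft)
  have hinv : (1 - M)⁻¹ = S := Matrix.inv_eq_right_inv hright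
  have hSnonneg : ∀ i j, 0 ≤ S i j := by
    intro i j
    rw [hS, Matrix.sum_apply]
    exact Finset.sum_nonneg fun k _ => hpownn k i j
  refine ⟨?_, ?_, ?_⟩
  · rw [hsub]; exact hunit
  · intro i j
    rw [hsub, hinv]
    exact hSnonneg i j
  · intro α hα i
    rw [hsub, hinv, Matrix.mulVec, dotProduct]
    have hSii : (1 : ℝ) ≤ S i i := by
      have h0 : (0 : ℕ) ∈ Finset.range n := Finset.mem_range.mpr i.pos
      have := Finset.single_le_sum (f := fun k => (M ^ k) i i)
        (fun k _ => hpownn k i i) h0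
      rw [hS, Matrix.sum_apply]
      simpa using this
    apply Finset.sum_pos'
    · intro j _
      exact mul_nonneg (hSnonneg i j) (hα j).le
    · exact ⟨i, Finset.mem_univ i, mul_pos (lt_of_lt_of_le one_pos hSii) (hα i)⟩
end
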